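/- Let d ≥ 1, let r be a nonzero integer, let p be a prime with p ≥ 2·M_d, and let q be a prime with q ∣ 3d²+3d-1. Suppose integers x, y with gcd(x,r) = 1 and x ≠ 0 satisfy ∑_{i=-d}^{d} (x+ir)^5 = y^p, and suppose q ∣ x. Then 2·v_q(x) ≥ v_q(3d²+3d-1) - v_q(5), and exactly one of the following holds: (a) v_q(x) = (v_q(3d²+3d-1) - v_q(5))/2 and v_q(P_d(x,r)) = p·v_q(y) - v_q(2d+1) - (v_q(3d²+3d-1) - v_q(5))/2; or (b) v_q(x) = p·v_q(y) - v_q(3d²+3d-1) - v_q(2d+1) and v_q(P_d(x,r)) = v_q(3d²+3d-1). -/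

import Mathlib

/-- `M_d`: the maximum over primes `q` of `v_q(d(d+1)(2d+1)(3d²+3d-1))`. -/
def Md (d : ℤ) : ℕ :=
  Finset.sup (d*(d+1)*(2*d+1)*(3*d^2+3*d-1)).natAbs.factorization.support
    (fun q => (d*(d+1)*(2*d+1)*(3*d^2+3*d-1)).natAbs.factorization q)

/-- `P_d(x,r) = (3/ℓ₃)x⁴ + (10d(d+1)/ℓ₃)x²r² + (d(d+1)(3d²+3d-1)/ℓ₃)r⁴`
where `ℓ₃ = gcd(3, d(d+1))`. -/
def Pd (d x r : ℤ) : ℤ :=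
  (3 / (Int.gcd 3 (d*(d+1)) : ℤ)) * x^4 +
  (10*d*(d+1) / (Int.gcd 3 (d*(d+1)) : ℤ)) * x^2 * r^2 +
  (d*(d+1)*(3*d^2+3*d-1) / (Int.gcd 3 (d*(d+1)) : ℤ)) * r^4

/-!
Summing the fifth powers gives `3 y^p = (2d+1) x ℓ₃ P_d(x,r)`, where `ℓ₃ P_d(x,r)` is the sum
of `3x⁴`, `10d(d+1)x²r²` and `d(d+1)(3d²+3d-1)r⁴`. As `q ∣ 3d(d+1) - 1` and `q ∤ r`, the prime
`q` divides none of `2, 3, d(d+1), r`, so these terms have valuations `4 v(x)`, `v(5) + 2 v(x)`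
and `v(3d²+3d-1)`. The first exceeds the second because `v(x) ≥ 1 ≥ v(5)`, so `v(P_d)` is the
smaller of the other two whenever they differ. Since `q ∣ x`, the valuation of the equation gives
`p ≤ p v(y) = v(2d+1) + v(x) + v(P_d)`, while `p ≥ 2M_d ≥ 2(v(2d+1) + v(3d²+3d-1))`; this rules
out `v(3d²+3d-1) > 2v(x) + v(5)`, and `v(P_d) = v(3d²+3d-1)` when the two valuations are equal.
-/

open Finset

theorem three_mul_sum_Icc_pow_five (x r : ℤ) {d : ℤ} (hd : 0 ≤ d) :
    3 * ∑ i ∈ Icc (-d) d, (x + i * r) ^ 5 =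
      (2 * d + 1) * x * (3 * x ^ 4 + 10 * d * (d + 1) * x ^ 2 * r ^ 2 +
        d * (d + 1) * (3 * d ^ 2 + 3 * d - 1) * r ^ 4) := by
  induction d, hd using Int.leInduction with
  | base => simp only [neg_zero, Icc_self, sum_singleton]; ring
  | succ n hn ih =>
    have hIcc :
        Icc (-(n + 1)) (n + 1) = insert (-(n + 1)) (insert (n + 1) (Icc (-n) n)) := by
      ext i
      simp only [mem_Icc, mem_insert]
      omega
    rw [hIcc, sum_insert (by simp only [mem_Icc, mem_insert]; omega),
      sum_insert (by simp only [mem_Icc]; omega)]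
    linear_combination ih

theorem gcd_mul_Pd (d x r : ℤ) :
    (Int.gcd 3 (d * (d + 1)) : ℤ) * Pd d x r =
      3 * x ^ 4 + 10 * d * (d + 1) * x ^ 2 * r ^ 2 +
        d * (d + 1) * (3 * d ^ 2 + 3 * d - 1) * r ^ 4 := by
  have h3 := Int.gcd_dvd_left 3 (d * (d + 1))
  have hdd := Int.gcd_dvd_right 3 (d * (d + 1))
  have h10 : (Int.gcd 3 (d * (d + 1)) : ℤ) ∣ 10 * d * (d + 1) := by
    rw [mul_assoc]; exact hdd.mul_left 10
  rw [Pd, mul_add, mul_add, ← mul_assoc, ← mul_assoc, ← mul_assoc, ← mul_assoc,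
    Int.mul_ediv_cancel' h3, Int.mul_ediv_cancel' h10, Int.mul_ediv_cancel' (hdd.mul_right _)]

theorem Pd_pos {d : ℤ} (hd : 0 ≤ d) (x r : ℤ) (hx : x ≠ 0) : 0 < Pd d x r := by
  have hg : (0 : ℤ) < Int.gcd 3 (d * (d + 1)) := by
    exact_mod_cast Int.gcd_pos_of_ne_zero_left _ (by norm_num)
  have hdd : 0 ≤ d * (d + 1) := by positivity
  have hD : 0 ≤ d * (d + 1) * (3 * d ^ 2 + 3 * d - 1) := by
    rcases hd.eq_or_lt with rfl | hd
    · simp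
    · exact mul_nonneg hdd (by nlinarith)
  refine pos_of_mul_pos_right (a := (Int.gcd 3 (d * (d + 1)) : ℤ)) ?_ hg.le
  rw [gcd_mul_Pd]
  have : 0 < x ^ 4 := by positivity
  have : 0 ≤ 10 * d * (d + 1) * x ^ 2 * r ^ 2 := by
    rw [mul_assoc 10]; positivity
  positivity

theorem Nat.factorization_le_sup (n q : ℕ) :
    n.factorization q ≤ n.factorization.support.sup n.factorization := by
  by_cases hq : q ∈ n.factorization.support
  · exact le_sup hq
  · rw [Finsupp.notMem_support_iff.mp hq]
    exact Nat.zero_le _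

section padicValInt

variable {p : ℕ} [Fact p.Prime]

theorem padicValInt_pow (z : ℤ) (n : ℕ) : padicValInt p (z ^ n) = n * padicValInt p z := by
  simp only [padicValInt, Int.natAbs_pow, padicValNat.pow]

theorem padicValInt_mul_of_not_dvd_left {u : ℤ} (hu : ¬ (p : ℤ) ∣ u) (z : ℤ) :
    padicValInt p (u * z) = padicValInt p z := by
  rcases eq_or_ne z 0 with rfl | hz
  · simp
  · rw [padicValInt.mul (by rintro rfl; exact hu (dvd_zero _)) hz,
      padicValInt.eq_zero_of_not_dvd hu, zero_add]

theorem padicValInt_mul_of_not_dvd_right {u : ℤ} (hu : ¬ (p : ℤ) ∣ u) (z : ℤ) :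
    padicValInt p (z * u) = padicValInt p z := by
  rw [mul_comm, padicValInt_mul_of_not_dvd_left hu]

theorem pow_dvd_of_le_padicValInt {n : ℕ} {z : ℤ} (h : n ≤ padicValInt p z) :
    (p : ℤ) ^ n ∣ z :=
  (padicValInt_dvd_iff n z).mpr (Or.inr h)

theorem one_le_padicValInt {z : ℤ} (hz : z ≠ 0) (hpz : (p : ℤ) ∣ z) : 1 ≤ padicValInt p z :=
  ((padicValInt_dvd_iff 1 z).mp (by simpa using hpz)).resolve_left hz

theorem padicValInt_add_of_pow_succ_dvd {a b : ℤ} (ha : a ≠ 0)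
    (hb : (p : ℤ) ^ (padicValInt p a + 1) ∣ b) : padicValInt p (a + b) = padicValInt p a := by
  have hle : (p : ℤ) ^ padicValInt p a ∣ a + b :=
    dvd_add (padicValInt_dvd a) ((pow_dvd_pow _ (Nat.le_succ _)).trans hb)
  have hnot : ¬ (p : ℤ) ^ (padicValInt p a + 1) ∣ a + b := fun h => by
    have := (padicValInt_dvd_iff _ a).mp ((dvd_add_left hb).mp h)
    omega
  rw [padicValInt_dvd_iff] at hle hnot
  omega

theorem padicValInt_five_le_one : padicValInt p 5 ≤ 1 := by
  by_contra! h
  have h25 : (p : ℤ) ^ 2 ∣ 5 := pow_dvd_of_le_padicValInt h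
  have hp5 : p = 5 :=
    (Nat.prime_dvd_prime_iff_eq Fact.out Nat.prime_five).mp
      (by exact_mod_cast (dvd_pow_self _ two_ne_zero).trans h25)
  subst hp5
  norm_num at h25

end padicValInt

section valuations

variable {q : ℕ} [Fact q.Prime] {d x r : ℤ}

theorem not_dvd_three_mul_of_dvd (hqD : (q : ℤ) ∣ 3 * d ^ 2 + 3 * d - 1) :
    ¬ (q : ℤ) ∣ 3 * (d * (d + 1)) := fun h =>
  (Nat.prime_iff_prime_int.mp Fact.out).not_dvd_one <| by
    simpa only [show 3 * (d * (d + 1)) - (3 * d ^ 2 + 3 * d - 1) = 1 by ring] using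
      dvd_sub h hqD

theorem not_dvd_three_of_dvd (hqD : (q : ℤ) ∣ 3 * d ^ 2 + 3 * d - 1) : ¬ (q : ℤ) ∣ 3 :=
  fun h => not_dvd_three_mul_of_dvd hqD (h.mul_right _)

theorem not_dvd_mul_add_one_of_dvd (hqD : (q : ℤ) ∣ 3 * d ^ 2 + 3 * d - 1) :
    ¬ (q : ℤ) ∣ d * (d + 1) :=
  fun h => not_dvd_three_mul_of_dvd hqD (h.mul_left 3)

theorem not_dvd_two_of_dvd (hqD : (q : ℤ) ∣ 3 * d ^ 2 + 3 * d - 1) : ¬ (q : ℤ) ∣ 2 :=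
  fun h => not_dvd_mul_add_one_of_dvd hqD (h.trans (Int.even_mul_succ_self d).two_dvd)

theorem padicValInt_add_le_Md (hqD : (q : ℤ) ∣ 3 * d ^ 2 + 3 * d - 1) :
    padicValInt q (2 * d + 1) + padicValInt q (3 * d ^ 2 + 3 * d - 1) ≤ Md d := by
  have hprod : padicValInt q (d * (d + 1) * (2 * d + 1) * (3 * d ^ 2 + 3 * d - 1)) =
      padicValInt q (2 * d + 1) + padicValInt q (3 * d ^ 2 + 3 * d - 1) := by
    rw [mul_assoc, padicValInt_mul_of_not_dvd_left (not_dvd_mul_add_one_of_dvd hqD),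
      padicValInt.mul (by omega) (by omega)]
  rw [← hprod, padicValInt, ← Nat.factorization_def _ Fact.out]
  exact Nat.factorization_le_sup _ _

theorem padicValInt_gcd_mul_Pd (hq3 : ¬ (q : ℤ) ∣ 3) :
    padicValInt q (Int.gcd 3 (d * (d + 1)) * Pd d x r) = padicValInt q (Pd d x r) :=
  padicValInt_mul_of_not_dvd_left (fun h => hq3 (h.trans (Int.gcd_dvd_left _ _))) _

theorem padicValInt_of_sum_pow_five_eq_pow (hd : 0 ≤ d) (hq3 : ¬ (q : ℤ) ∣ 3) (hx : x ≠ 0)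
    {y : ℤ} {p : ℕ} (heq : ∑ i ∈ Icc (-d) d, (x + i * r) ^ 5 = y ^ p) :
    p * padicValInt q y =
      padicValInt q (2 * d + 1) + padicValInt q x + padicValInt q (Pd d x r) := by
  have h := three_mul_sum_Icc_pow_five x r hd
  rw [heq, ← gcd_mul_Pd] at h
  have hPd : (Int.gcd 3 (d * (d + 1)) : ℤ) * Pd d x r ≠ 0 :=
    mul_ne_zero (by simp) (Pd_pos hd x r hx).ne'
  have hv := congrArg (padicValInt q) h
  rwa [padicValInt_mul_of_not_dvd_left hq3, padicValInt_pow,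
    padicValInt.mul (mul_ne_zero (by omega) hx) hPd, padicValInt.mul (by omega) hx,
    padicValInt_gcd_mul_Pd hq3] at hv

theorem padicValInt_Pd (hq3 : ¬ (q : ℤ) ∣ 3) :
    padicValInt q (Pd d x r) = padicValInt q (3 * x ^ 4 + 10 * d * (d + 1) * x ^ 2 * r ^ 2 +
      d * (d + 1) * (3 * d ^ 2 + 3 * d - 1) * r ^ 4) := by
  rw [← padicValInt_gcd_mul_Pd hq3, gcd_mul_Pd]

theorem padicValInt_three_mul_pow_four (hq3 : ¬ (q : ℤ) ∣ 3) :
    padicValInt q (3 * x ^ 4) = 4 * padicValInt q x := by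
  rw [padicValInt_mul_of_not_dvd_left hq3, padicValInt_pow]

theorem padicValInt_middle_term (hqD : (q : ℤ) ∣ 3 * d ^ 2 + 3 * d - 1) (hqr : ¬ (q : ℤ) ∣ r)
    (hx : x ≠ 0) :
    padicValInt q (10 * d * (d + 1) * x ^ 2 * r ^ 2) =
      padicValInt q 5 + 2 * padicValInt q x := by
  have hu : ¬ (q : ℤ) ∣ 2 * (d * (d + 1)) * r ^ 2 := by
    have hq : Prime (q : ℤ) := Nat.prime_iff_prime_int.mp Fact.out
    rw [hq.dvd_mul, hq.dvd_mul, not_or, not_or]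
    exact ⟨⟨not_dvd_two_of_dvd hqD, not_dvd_mul_add_one_of_dvd hqD⟩,
      fun h => hqr (hq.dvd_of_dvd_pow h)⟩
  rw [show 10 * d * (d + 1) * x ^ 2 * r ^ 2 = 5 * x ^ 2 * (2 * (d * (d + 1)) * r ^ 2) by ring,
    padicValInt_mul_of_not_dvd_right hu, padicValInt.mul (by norm_num) (pow_ne_zero _ hx),
    padicValInt_pow]

theorem padicValInt_last_term (hqD : (q : ℤ) ∣ 3 * d ^ 2 + 3 * d - 1) (hqr : ¬ (q : ℤ) ∣ r) :
    padicValInt q (d * (d + 1) * (3 * d ^ 2 + 3 * d - 1) * r ^ 4) =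
      padicValInt q (3 * d ^ 2 + 3 * d - 1) := by
  rw [padicValInt_mul_of_not_dvd_right (fun h => hqr (Int.Prime.dvd_pow' Fact.out h)),
    padicValInt_mul_of_not_dvd_left (not_dvd_mul_add_one_of_dvd hqD)]

theorem padicValInt_Pd_of_lt (hqD : (q : ℤ) ∣ 3 * d ^ 2 + 3 * d - 1) (hqr : ¬ (q : ℤ) ∣ r)
    (hx : 1 ≤ padicValInt q x)
    (h : padicValInt q (3 * d ^ 2 + 3 * d - 1) < 2 * padicValInt q x + padicValInt q 5) :
    padicValInt q (Pd d x r) = padicValInt q (3 * d ^ 2 + 3 * d - 1) := by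
  have hq3 := not_dvd_three_of_dvd hqD
  have hx0 : x ≠ 0 := by rintro rfl; simp at hx
  have hr0 : r ≠ 0 := by rintro rfl; exact hqr (dvd_zero _)
  have hdd0 : d * (d + 1) ≠ 0 := by
    rintro h0; exact not_dvd_mul_add_one_of_dvd hqD (h0 ▸ dvd_zero _)
  have h5 : padicValInt q 5 ≤ 1 := padicValInt_five_le_one
  have hlast := padicValInt_last_term hqD hqr
  have hdvd : (q : ℤ) ^ (padicValInt q (3 * d ^ 2 + 3 * d - 1) + 1) ∣
      3 * x ^ 4 + 10 * d * (d + 1) * x ^ 2 * r ^ 2 := by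
    refine dvd_add (pow_dvd_of_le_padicValInt ?_) (pow_dvd_of_le_padicValInt ?_)
    · rw [padicValInt_three_mul_pow_four hq3]; omega
    · rw [padicValInt_middle_term hqD hqr hx0]; omega
  rw [padicValInt_Pd hq3, add_comm, padicValInt_add_of_pow_succ_dvd
      (mul_ne_zero (mul_ne_zero hdd0 (by omega)) (pow_ne_zero _ hr0)) (hlast ▸ hdvd), hlast]

theorem padicValInt_Pd_of_gt (hqD : (q : ℤ) ∣ 3 * d ^ 2 + 3 * d - 1) (hqr : ¬ (q : ℤ) ∣ r)
    (hx : 1 ≤ padicValInt q x)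
    (h : 2 * padicValInt q x + padicValInt q 5 < padicValInt q (3 * d ^ 2 + 3 * d - 1)) :
    padicValInt q (Pd d x r) = 2 * padicValInt q x + padicValInt q 5 := by
  have hq3 := not_dvd_three_of_dvd hqD
  have hx0 : x ≠ 0 := by rintro rfl; simp at hx
  have h5 : padicValInt q 5 ≤ 1 := padicValInt_five_le_one
  have hmid : padicValInt q (10 * d * (d + 1) * x ^ 2 * r ^ 2) =
      2 * padicValInt q x + padicValInt q 5 := by
    rw [padicValInt_middle_term hqD hqr hx0, add_comm]
  have hdvd : (q : ℤ) ^ (2 * padicValInt q x + padicValInt q 5 + 1) ∣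
      3 * x ^ 4 + d * (d + 1) * (3 * d ^ 2 + 3 * d - 1) * r ^ 4 := by
    refine dvd_add (pow_dvd_of_le_padicValInt ?_) (pow_dvd_of_le_padicValInt ?_)
    · rw [padicValInt_three_mul_pow_four hq3]; omega
    · rw [padicValInt_last_term hqD hqr]; omega
  rw [padicValInt_Pd hq3, add_comm (3 * x ^ 4), add_assoc, padicValInt_add_of_pow_succ_dvd
      (fun h0 => by rw [h0, padicValInt.zero] at hmid; omega) (hmid ▸ hdvd), hmid]

end valuations

/-- `a, k, m, e, vy, vP` stand for the `q`-adic valuations of `x`, `3d²+3d-1`, `5`, `2d+1`, `y`,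
`P_d(x,r)`, and `M` for `M_d`. -/
theorem valuation_dichotomy {a k m e vy vP p M : ℕ} (ha : 1 ≤ a) (hM : e + k ≤ M)
    (hp : 2 * M ≤ p) (hval : p * vy = e + a + vP) (hlt : k < 2 * a + m → vP = k)
    (hgt : 2 * a + m < k → vP = 2 * a + m) :
    ((k : ℤ) - m ≤ 2 * a) ∧
      Xor' ((a : ℚ) = ((k : ℚ) - m) / 2 ∧ (vP : ℚ) = p * vy - e - ((k : ℚ) - m) / 2)
        ((a : ℚ) = p * vy - k - e ∧ (vP : ℚ) = k) := by
  have hvy : p ≤ e + a + vP := by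
    rw [← hval]
    exact Nat.le_mul_of_pos_right p (Nat.pos_of_ne_zero (by rintro rfl; omega))
  have hvalQ : (p : ℚ) * vy = e + a + vP := by exact_mod_cast hval
  refine ⟨by omega, ?_⟩
  rcases lt_trichotomy k (2 * a + m) with h | h | h
  · have hvP := hlt h
    refine Or.inr ⟨⟨?_, by rw [hvP]⟩, fun ⟨h1, _⟩ => ?_⟩
    · rw [hvP] at hvalQ; linarith
    · have : ((2 * a + m : ℕ) : ℚ) = k := by push_cast; linarith
      exact (by omega : 2 * a + m ≠ k) (by exact_mod_cast this)
  · have hkQ : (k : ℚ) = 2 * a + m := by exact_mod_cast h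
    refine Or.inl ⟨⟨by linarith, by linarith⟩, fun ⟨_, h2⟩ => ?_⟩
    have : vP = k := by exact_mod_cast h2
    omega
  · have := hgt h
    omega

theorem valuation_q_dvd_three_d_sq_general (d : ℤ) (hd : 1 ≤ d) (r : ℤ)
    (p q : ℕ) (hq : q.Prime) (hpM : 2 * Md d ≤ p)
    (hqd : (q : ℤ) ∣ 3*d^2+3*d-1) (x y : ℤ) (hxr : Int.gcd x r = 1) (hx : x ≠ 0)
    (heq : ∑ i ∈ Finset.Icc (-d) d, (x + i*r)^5 = y^p) (hqx : (q : ℤ) ∣ x) :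
    ((padicValInt q (3*d^2+3*d-1) : ℤ) - padicValInt q 5 ≤ 2 * padicValInt q x) ∧
    Xor'
      ((padicValInt q x : ℚ) =
         ((padicValInt q (3*d^2+3*d-1) : ℚ) - padicValInt q 5) / 2 ∧
       (padicValInt q (Pd d x r) : ℚ) =
         p * padicValInt q y - padicValInt q (2*d+1) -
           ((padicValInt q (3*d^2+3*d-1) : ℚ) - padicValInt q 5) / 2)
      ((padicValInt q x : ℚ) =
         p * padicValInt q y - padicValInt q (3*d^2+3*d-1) - padicValInt q (2*d+1) ∧
       (padicValInt q (Pd d x r) : ℚ) = (padicValInt q (3*d^2+3*d-1) : ℚ)) := by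
  have : Fact q.Prime := ⟨hq⟩
  have hqr : ¬ (q : ℤ) ∣ r := fun h =>
    (Nat.prime_iff_prime_int.mp hq).not_dvd_one (by simpa [hxr] using Int.dvd_coe_gcd hqx h)
  have ha : 1 ≤ padicValInt q x := one_le_padicValInt hx hqx
  exact valuation_dichotomy ha (padicValInt_add_le_Md hqd) hpM
    (padicValInt_of_sum_pow_five_eq_pow (by omega) (not_dvd_three_of_dvd hqd) hx heq)
    (padicValInt_Pd_of_lt hqd hqr ha) (padicValInt_Pd_of_gt hqd hqr ha)

theorem valuation_q_dvd_three_d_sq (d : ℤ) (hd : 1 ≤ d) (r : ℤ) (hr : r ≠ 0)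
    (p q : ℕ) (hp : p.Prime) (hq : q.Prime) (hpM : 2 * Md d ≤ p)
    (hqd : (q : ℤ) ∣ 3*d^2+3*d-1) (x y : ℤ) (hxr : Int.gcd x r = 1) (hx : x ≠ 0)
    (heq : ∑ i ∈ Finset.Icc (-d) d, (x + i*r)^5 = y^p) (hqx : (q : ℤ) ∣ x) :
    ((padicValInt q (3*d^2+3*d-1) : ℤ) - padicValInt q 5 ≤ 2 * padicValInt q x) ∧
    Xor'
      ((padicValInt q x : ℚ) =
         ((padicValInt q (3*d^2+3*d-1) : ℚ) - padicValInt q 5) / 2 ∧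
       (padicValInt q (Pd d x r) : ℚ) =
         p * padicValInt q y - padicValInt q (2*d+1) -
           ((padicValInt q (3*d^2+3*d-1) : ℚ) - padicValInt q 5) / 2)
      ((padicValInt q x : ℚ) =
         p * padicValInt q y - padicValInt q (3*d^2+3*d-1) - padicValInt q (2*d+1) ∧
       (padicValInt q (Pd d x r) : ℚ) = (padicValInt q (3*d^2+3*d-1) : ℚ)) :=
  valuation_q_dvd_three_d_sq_general d hd r p q hq hpM hqd x y hxr hx heq hqx
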